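/- arXiv:1101.2570 — 2 statements merged into one kernel-verified Lean document; each statement's English description precedes it below -/
import Mathlib

section
/- As n → ∞, E[I_n²·log I_n] = E[V²]·n²·log n + E[V²·log V]·n² + o(n²). -/
/-!
Given `V = x`, the variable `I n - s₁` is binomial with parameters `η = n - s₀ - b s₁` and `x`, so
`E[f(I n)]` is an average of `f((k + s₁)/n)` against Bernstein weights at `V`; by the variance
`η x (1 - x)` and Cauchy–Schwarz these points lie within `(√η + s₀ + b s₁)/n` of `x` on average.
Writing `j² log j = n² G(j/n)` with `G y = y² log y + y² log n`, which is Lipschitz on `[0, 1]`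
with constant `3 + 2 log n`, the error term is at most `n (3 + 2 log n)(√n + s₀ + b s₁) = o(n²)`.
-/

open MeasureTheory Filter Topology Asymptotics

open Finset Real

lemma bernsteinPolynomial_eval (η k : ℕ) (x : ℝ) :
    (bernsteinPolynomial ℝ η k).eval x = η.choose k * x ^ k * (1 - x) ^ (η - k) := by
  simp [bernsteinPolynomial]

lemma sum_bernsteinPolynomial_eval (η : ℕ) (x : ℝ) :
    ∑ k ∈ range (η + 1), (bernsteinPolynomial ℝ η k).eval x = 1 := by
  simpa [Polynomial.eval_finsetSum] using congrArg (Polynomial.eval x) (bernsteinPolynomial.sum ℝ η)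

lemma sum_sq_sub_mul_bernsteinPolynomial_eval (η : ℕ) (x : ℝ) :
    ∑ k ∈ range (η + 1), ((k : ℝ) - η * x) ^ 2 * (bernsteinPolynomial ℝ η k).eval x
      = η * x * (1 - x) := by
  have h := congrArg (Polynomial.eval x) (bernsteinPolynomial.variance ℝ η)
  simp only [Polynomial.eval_finsetSum, Polynomial.eval_mul, Polynomial.eval_pow,
    Polynomial.eval_sub, Polynomial.eval_X, Polynomial.eval_natCast,
    Polynomial.eval_one, nsmul_eq_mul] at h
  rw [← h]
  exact sum_congr rfl fun k _ => by ring

lemma bernsteinPolynomial_eval_nonneg (η k : ℕ) {x : ℝ} (hx : x ∈ Set.Icc (0 : ℝ) 1) :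
    0 ≤ (bernsteinPolynomial ℝ η k).eval x := by
  obtain ⟨hx0, hx1⟩ := hx
  have : 0 ≤ 1 - x := sub_nonneg.2 hx1
  rw [bernsteinPolynomial_eval]
  positivity

lemma sum_abs_sub_mul_bernsteinPolynomial_eval_le (η : ℕ) {x : ℝ}
    (hx : x ∈ Set.Icc (0 : ℝ) 1) :
    ∑ k ∈ range (η + 1), |(k : ℝ) - η * x| * (bernsteinPolynomial ℝ η k).eval x ≤ √η := by
  set w := fun k : ℕ => (bernsteinPolynomial ℝ η k).eval x
  have hw : ∀ k ∈ range (η + 1), 0 ≤ w k := fun k _ => bernsteinPolynomial_eval_nonneg η k hx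
  have hCS := sum_sq_le_sum_mul_sum_of_sq_le_mul (range (η + 1))
    (r := fun k => |(k : ℝ) - η * x| * w k) (f := fun k => ((k : ℝ) - η * x) ^ 2 * w k)
    (fun k hk => mul_nonneg (sq_nonneg _) (hw k hk)) hw
    (fun k _ => (by rw [mul_pow, sq_abs]; ring : _ = _).le)
  rw [sum_sq_sub_mul_bernsteinPolynomial_eval, sum_bernsteinPolynomial_eval, mul_one] at hCS
  have hvar : (η : ℝ) * x * (1 - x) ≤ η := by
    have : x * (1 - x) ≤ 1 := by nlinarith [hx.1, hx.2]
    nlinarith [(Nat.cast_nonneg η : (0 : ℝ) ≤ η)]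
  exact (le_abs_self _).trans (abs_le_sqrt (hCS.trans hvar))

section Shifted

variable {η m s n : ℕ} (hn : η + m = n) (hn0 : 0 < n) (hs : s ≤ m)
include hn hn0 hs

lemma sum_abs_div_sub_mul_bernsteinPolynomial_eval_le {x : ℝ} (hx : x ∈ Set.Icc (0 : ℝ) 1) :
    ∑ k ∈ range (η + 1), |((k + s : ℕ) : ℝ) / n - x| * (bernsteinPolynomial ℝ η k).eval x
      ≤ (√η + m) / n := by
  have hn0' : (0 : ℝ) < n := by exact_mod_cast hn0
  have hshift : |(s : ℝ) - m * x| ≤ m := by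
    have : (s : ℝ) ≤ m := by exact_mod_cast hs
    rw [abs_le]; constructor <;> nlinarith [hx.1, hx.2, (Nat.cast_nonneg s : (0 : ℝ) ≤ s)]
  calc ∑ k ∈ range (η + 1), |((k + s : ℕ) : ℝ) / n - x| * (bernsteinPolynomial ℝ η k).eval x
      ≤ ∑ k ∈ range (η + 1),
          (|(k : ℝ) - η * x| * (bernsteinPolynomial ℝ η k).eval x
            + m * (bernsteinPolynomial ℝ η k).eval x) / n := by
        refine sum_le_sum fun k _ => ?_
        rw [← add_mul, mul_div_right_comm]
        refine mul_le_mul_of_nonneg_right ?_ (bernsteinPolynomial_eval_nonneg η k hx)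
        have hsplit : ((k + s : ℕ) : ℝ) / n - x = ((k - η * x) + (s - m * x)) / n := by
          rw [eq_div_iff hn0'.ne', sub_mul, div_mul_cancel₀ _ hn0'.ne', ← hn]; push_cast; ring
        rw [hsplit, abs_div, abs_of_pos hn0']
        gcongr
        exact (abs_add_le _ _).trans (by gcongr)
    _ ≤ (√η + m) / n := by
        rw [← sum_div, sum_add_distrib, ← mul_sum, sum_bernsteinPolynomial_eval, mul_one]
        gcongr
        exact sum_abs_sub_mul_bernsteinPolynomial_eval_le η hx

lemma abs_sum_mul_bernsteinPolynomial_eval_sub_le {g : ℝ → ℝ} {L : ℝ}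
    (hg : ∀ y ∈ Set.Icc (0 : ℝ) 1, ∀ z ∈ Set.Icc (0 : ℝ) 1, |g y - g z| ≤ L * |y - z|)
    {x : ℝ} (hx : x ∈ Set.Icc (0 : ℝ) 1) :
    |∑ k ∈ range (η + 1), g (((k + s : ℕ) : ℝ) / n) * (bernsteinPolynomial ℝ η k).eval x - g x|
      ≤ L * ((√η + m) / n) := by
  have hL : 0 ≤ L := by
    simpa using (abs_nonneg _).trans (hg 1 (by simp) 0 (by simp))
  have hmem : ∀ k ∈ range (η + 1), ((k + s : ℕ) : ℝ) / n ∈ Set.Icc (0 : ℝ) 1 := by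
    intro k hk
    have : k + s ≤ n := by rw [mem_range] at hk; omega
    exact ⟨by positivity, div_le_one_of_le₀ (by exact_mod_cast this) (Nat.cast_nonneg n)⟩
  calc |∑ k ∈ range (η + 1), g (((k + s : ℕ) : ℝ) / n) * (bernsteinPolynomial ℝ η k).eval x
          - g x|
      = |∑ k ∈ range (η + 1),
          (g (((k + s : ℕ) : ℝ) / n) - g x) * (bernsteinPolynomial ℝ η k).eval x| := by
        simp_rw [sub_mul, sum_sub_distrib, ← mul_sum, sum_bernsteinPolynomial_eval, mul_one]
    _ ≤ ∑ k ∈ range (η + 1),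
          L * (|((k + s : ℕ) : ℝ) / n - x| * (bernsteinPolynomial ℝ η k).eval x) := by
        refine (abs_sum_le_sum_abs _ _).trans (sum_le_sum fun k hk => ?_)
        rw [abs_mul, abs_of_nonneg (bernsteinPolynomial_eval_nonneg η k hx), ← mul_assoc]
        exact mul_le_mul_of_nonneg_right (hg _ (hmem k hk) x hx)
          (bernsteinPolynomial_eval_nonneg η k hx)
    _ ≤ L * ((√η + m) / n) := by
        rw [← mul_sum]
        exact mul_le_mul_of_nonneg_left
          (sum_abs_div_sub_mul_bernsteinPolynomial_eval_le hn hn0 hs hx) hL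

end Shifted

lemma continuous_sq_mul_log : Continuous fun y : ℝ => y ^ 2 * log y :=
  (continuous_id.mul continuous_mul_log).congr fun y => by simp only [Pi.mul_apply, id]; ring

lemma abs_sq_mul_log_sub_le {y z : ℝ} (hy : y ∈ Set.Icc (0 : ℝ) 1) (hz : z ∈ Set.Icc (0 : ℝ) 1) :
    |y ^ 2 * log y - z ^ 2 * log z| ≤ 3 * |y - z| := by
  wlog hzy : z < y generalizing y z
  · rcases (not_lt.1 hzy).lt_or_eq with h | rfl
    · rw [abs_sub_comm, abs_sub_comm y]; exact this hz hy h
    · simp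
  have hderiv : ∀ c ∈ Set.Ioo z y,
      HasDerivAt (fun y : ℝ => y ^ 2 * log y) (2 * c * log c + c) c := by
    intro c hc
    have hc0 : c ≠ 0 := (hz.1.trans_lt hc.1).ne'
    exact ((hasDerivAt_pow 2 c).mul (hasDerivAt_log hc0)).congr_deriv (by field_simp; ring)
  obtain ⟨c, hc, hslope⟩ := exists_hasDerivAt_eq_slope _ _ hzy
    continuous_sq_mul_log.continuousOn hderiv
  have hc0 : 0 < c := hz.1.trans_lt hc.1
  have hc1 : c ≤ 1 := hc.2.le.trans hy.2
  have hderiv_le : |2 * c * log c + c| ≤ 3 := by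
    have := (abs_log_mul_self_lt c hc0 hc1).le
    calc |2 * c * log c + c| ≤ 2 * |log c * c| + |c| := by
          refine (abs_add_le _ _).trans (le_of_eq ?_)
          rw [show 2 * c * log c = 2 * (log c * c) by ring, abs_mul, abs_two]
      _ ≤ 3 := by rw [abs_of_pos hc0]; linarith
  rw [eq_div_iff (sub_ne_zero.2 hzy.ne')] at hslope
  rw [← hslope, abs_mul]
  exact mul_le_mul_of_nonneg_right hderiv_le (abs_nonneg _)

lemma abs_sq_sub_sq_le {y z : ℝ} (hy : y ∈ Set.Icc (0 : ℝ) 1) (hz : z ∈ Set.Icc (0 : ℝ) 1) :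
    |y ^ 2 - z ^ 2| ≤ 2 * |y - z| := by
  rw [sq_sub_sq, abs_mul, abs_of_nonneg (add_nonneg hy.1 hz.1)]
  exact mul_le_mul_of_nonneg_right (by linarith [hy.2, hz.2]) (abs_nonneg _)

lemma abs_sq_mul_log_add_mul_sq_sub_le {c y z : ℝ} (hc : 0 ≤ c) (hy : y ∈ Set.Icc (0 : ℝ) 1)
    (hz : z ∈ Set.Icc (0 : ℝ) 1) :
    |(y ^ 2 * log y + c * y ^ 2) - (z ^ 2 * log z + c * z ^ 2)| ≤ (3 + 2 * c) * |y - z| :=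
  calc _ = |(y ^ 2 * log y - z ^ 2 * log z) + c * (y ^ 2 - z ^ 2)| := by ring_nf
    _ ≤ 3 * |y - z| + c * (2 * |y - z|) := by
      refine (abs_add_le _ _).trans (add_le_add (abs_sq_mul_log_sub_le hy hz) ?_)
      rw [abs_mul, abs_of_nonneg hc]
      exact mul_le_mul_of_nonneg_left (abs_sq_sub_sq_le hy hz) hc
    _ = (3 + 2 * c) * |y - z| := by ring

lemma sq_mul_log_eq (n : ℕ) (hn : n ≠ 0) (j : ℕ) :
    (j : ℝ) ^ 2 * log j = n ^ 2 * ((j / n : ℝ) ^ 2 * log (j / n) + log n * (j / n : ℝ) ^ 2) := by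
  have hn' : (n : ℝ) ≠ 0 := by exact_mod_cast hn
  rcases eq_or_ne j 0 with rfl | hj
  · simp
  rw [log_div (by exact_mod_cast hj) hn']
  field_simp
  ring

lemma isLittleO_log_mul_sqrt_add_atTop (a b c : ℝ) :
    (fun x => (a + b * log x) * (√x + c)) =o[atTop] id := by
  have hsqrt : (fun x => (x : ℝ) ^ (1 / 2 : ℝ)) = (√·) := funext fun x => (sqrt_eq_rpow x).symm
  have hlog : log =o[atTop] (√·) := hsqrt ▸ isLittleO_log_rpow_atTop (by norm_num)
  have hone : (fun _ => (1 : ℝ)) =o[atTop] (√·) :=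
    (isLittleO_one_left_iff ℝ).2 <| tendsto_abs_atTop_atTop.comp tendsto_sqrt_atTop
  have h1 : (fun x => a + b * log x) =o[atTop] (√·) :=
    (hone.const_mul_left a).congr_left (fun _ => mul_one a) |>.add (hlog.const_mul_left b)
  have h2 : (fun x => √x + c) =O[atTop] (√·) :=
    (isBigO_refl _ _).add ((hone.const_mul_left c).congr_left (fun _ => mul_one c)).isBigO
  refine (h1.mul_isBigO h2).congr' EventuallyEq.rfl ?_
  filter_upwards [eventually_ge_atTop 0] with x hx
  exact mul_self_sqrt hx

section Probability

variable {Ω : Type*} [MeasurableSpace Ω] {ℙ : Measure Ω}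

lemma integrable_comp_of_mem_isCompact [IsFiniteMeasure ℙ] {V : Ω → ℝ} (hV : Measurable V)
    {K : Set ℝ} (hK : IsCompact K) (hVK : ∀ ω, V ω ∈ K) {f : ℝ → ℝ} (hf : Continuous f) :
    Integrable (fun ω => f (V ω)) ℙ := by
  obtain ⟨C, hC⟩ := hK.exists_bound_of_continuousOn hf.continuousOn
  exact Integrable.of_bound (hf.measurable.comp hV).aestronglyMeasurable C
    (ae_of_all _ fun ω => hC _ (hVK ω))

lemma ae_mem_of_sum_measureReal_eq_one [IsProbabilityMeasure ℙ] {J : Ω → ℕ} (hJ : Measurable J)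
    {t : Finset ℕ} (ht : ∑ j ∈ t, ℙ.real {ω | J ω = j} = 1) : ∀ᵐ ω ∂ℙ, J ω ∈ t := by
  have hpre : ℙ.real (J ⁻¹' t) = 1 :=
    (sum_measureReal_preimage_singleton t fun j _ => hJ (measurableSet_singleton j)).symm.trans ht
  refine (ae_iff_measure_eq (hJ t.measurableSet).nullMeasurableSet).2 ?_
  rw [measure_univ, ← ENNReal.toReal_eq_one_iff]
  exact hpre

lemma integral_comp_eq_sum_of_ae_mem [IsFiniteMeasure ℙ] {J : Ω → ℕ} (hJ : Measurable J)
    {t : Finset ℕ} (ht : ∀ᵐ ω ∂ℙ, J ω ∈ t) (F : ℕ → ℝ) :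
    ∫ ω, F (J ω) ∂ℙ = ∑ j ∈ t, F j * ℙ.real {ω | J ω = j} := by
  have hfiber : ∀ j, MeasurableSet {ω | J ω = j} := fun j => hJ (measurableSet_singleton j)
  calc ∫ ω, F (J ω) ∂ℙ = ∫ ω, ∑ j ∈ t, {ω | J ω = j}.indicator (fun _ => F j) ω ∂ℙ := by
        refine integral_congr_ae (ht.mono fun ω hω => ?_)
        simp [Set.indicator_apply, hω]
    _ = ∑ j ∈ t, F j * ℙ.real {ω | J ω = j} := by
        rw [integral_finsetSum _ fun j _ => (integrable_const (F j)).indicator (hfiber j)]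
        simp_rw [integral_indicator_const _ (hfiber _), smul_eq_mul, mul_comm]

lemma abs_integral_comp_div_sub_integral_comp_le [IsProbabilityMeasure ℙ]
    {V : Ω → ℝ} (hV : Measurable V) (hV01 : ∀ ω, V ω ∈ Set.Icc (0 : ℝ) 1)
    {J : Ω → ℕ} (hJ : Measurable J) {η m s n : ℕ} (hn : η + m = n) (hn0 : 0 < n) (hs : s ≤ m)
    (hdist : ∀ k ≤ η, ℙ.real {ω | J ω = k + s} = ∫ ω, (bernsteinPolynomial ℝ η k).eval (V ω) ∂ℙ)
    {g : ℝ → ℝ} (hg_cont : Continuous g) {L : ℝ}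
    (hg : ∀ y ∈ Set.Icc (0 : ℝ) 1, ∀ z ∈ Set.Icc (0 : ℝ) 1, |g y - g z| ≤ L * |y - z|) :
    |∫ ω, g (J ω / n) ∂ℙ - ∫ ω, g (V ω) ∂ℙ| ≤ L * ((√η + m) / n) := by
  have hint : ∀ {f : ℝ → ℝ}, Continuous f → Integrable (fun ω => f (V ω)) ℙ :=
    integrable_comp_of_mem_isCompact hV isCompact_Icc hV01
  have hw_int : ∀ k ∈ range (η + 1),
      Integrable (fun ω => (bernsteinPolynomial ℝ η k).eval (V ω)) ℙ :=
    fun k _ => hint (bernsteinPolynomial ℝ η k).continuous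
  have hdist' : ∀ k ∈ range (η + 1),
      ℙ.real {ω | J ω = k + s} = ∫ ω, (bernsteinPolynomial ℝ η k).eval (V ω) ∂ℙ :=
    fun k hk => hdist k (Nat.lt_succ_iff.1 (mem_range.1 hk))
  have hmass : ∑ j ∈ (range (η + 1)).map (addRightEmbedding s), ℙ.real {ω | J ω = j} = 1 := by
    simp only [sum_map, addRightEmbedding_apply]
    rw [sum_congr rfl hdist', ← integral_finsetSum _ hw_int]
    simp [sum_bernsteinPolynomial_eval]
  have hJ_mean : ∫ ω, g (J ω / n) ∂ℙ
      = ∫ ω, ∑ k ∈ range (η + 1),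
          g (((k + s : ℕ) : ℝ) / n) * (bernsteinPolynomial ℝ η k).eval (V ω) ∂ℙ := by
    rw [integral_comp_eq_sum_of_ae_mem hJ (ae_mem_of_sum_measureReal_eq_one hJ hmass)
      (fun j => g (j / n)), integral_finsetSum _ fun k hk => (hw_int k hk).const_mul _]
    simp only [sum_map, addRightEmbedding_apply]
    refine sum_congr rfl fun k hk => ?_
    rw [integral_const_mul, hdist' k hk]
  rw [hJ_mean, ← integral_sub (integrable_finsetSum _ fun k hk => (hw_int k hk).const_mul _)
    (hint hg_cont), ← Real.norm_eq_abs]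
  refine (norm_integral_le_of_norm_le_const (C := L * ((√η + m) / n))
    (ae_of_all _ fun ω => ?_)).trans_eq (by rw [probReal_univ, mul_one])
  rw [Real.norm_eq_abs]
  exact abs_sum_mul_bernsteinPolynomial_eval_sub_le hn hn0 hs hg (hV01 ω)

lemma abs_integral_sq_mul_log_sub_le [IsProbabilityMeasure ℙ]
    {V : Ω → ℝ} (hV : Measurable V) (hV01 : ∀ ω, V ω ∈ Set.Icc (0 : ℝ) 1)
    {J : Ω → ℕ} (hJ : Measurable J) {η m s n : ℕ} (hn : η + m = n) (hn0 : 0 < n) (hs : s ≤ m)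
    (hdist : ∀ k ≤ η, ℙ.real {ω | J ω = k + s} = ∫ ω, (bernsteinPolynomial ℝ η k).eval (V ω) ∂ℙ) :
    |(∫ ω, (J ω : ℝ) ^ 2 * log (J ω) ∂ℙ) - (∫ ω, V ω ^ 2 ∂ℙ) * n ^ 2 * log n
        - (∫ ω, V ω ^ 2 * log (V ω) ∂ℙ) * n ^ 2| ≤ n * ((3 + 2 * log n) * (√n + m)) := by
  set G : ℝ → ℝ := fun y => y ^ 2 * log y + log n * y ^ 2
  have hlog : 0 ≤ log n := log_natCast_nonneg n
  have hG_cont : Continuous G := continuous_sq_mul_log.add (continuous_const.mul (continuous_pow 2))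
  have hint : ∀ {f : ℝ → ℝ}, Continuous f → Integrable (fun ω => f (V ω)) ℙ :=
    integrable_comp_of_mem_isCompact hV isCompact_Icc hV01
  have hJ_eq : ∫ ω, (J ω : ℝ) ^ 2 * log (J ω) ∂ℙ = n ^ 2 * ∫ ω, G (J ω / n) ∂ℙ := by
    rw [← integral_const_mul]
    exact integral_congr_ae (ae_of_all _ fun ω => sq_mul_log_eq n hn0.ne' (J ω))
  have hV_eq : (∫ ω, V ω ^ 2 ∂ℙ) * n ^ 2 * log n + (∫ ω, V ω ^ 2 * log (V ω) ∂ℙ) * n ^ 2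
      = n ^ 2 * ∫ ω, G (V ω) ∂ℙ := by
    rw [integral_add (hint continuous_sq_mul_log) ((hint (continuous_pow 2)).const_mul _),
      integral_const_mul]
    ring
  have hbound := abs_integral_comp_div_sub_integral_comp_le hV hV01 hJ hn hn0 hs hdist hG_cont
    fun y hy z hz => abs_sq_mul_log_add_mul_sq_sub_le hlog hy hz
  have hη : √η ≤ √n := sqrt_le_sqrt (by exact_mod_cast hn ▸ Nat.le_add_right η m)
  have hn0' : (0 : ℝ) < n := by exact_mod_cast hn0
  calc _ = n ^ 2 * |∫ ω, G (J ω / n) ∂ℙ - ∫ ω, G (V ω) ∂ℙ| := by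
        rw [sub_sub, hJ_eq, hV_eq, ← mul_sub, abs_mul, abs_of_nonneg (sq_nonneg _)]
    _ ≤ n ^ 2 * ((3 + 2 * log n) * ((√n + m) / n)) := by
        gcongr
        exact hbound.trans (by gcongr)
    _ = n * ((3 + 2 * log n) * (√n + m)) := by field_simp

end Probability

theorem stmt14_general
    (b s₀ s₁ : ℕ) (hb : 2 ≤ b)
    {Ω : Type*} [MeasurableSpace Ω] (ℙ : Measure Ω) [IsProbabilityMeasure ℙ]
    (V : Ω → ℝ) (hVmeas : Measurable V)
    (hV01 : ∀ ω, V ω ∈ Set.Icc (0:ℝ) 1)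
    (I : ℕ → Ω → ℕ) (hImeas : ∀ n, Measurable (I n))
    (hIdist : ∀ n : ℕ, s₀ + b * s₁ ≤ n → ∀ k : ℕ, k ≤ n - s₀ - b * s₁ →
      (ℙ {ω | I n ω = k + s₁}).toReal
        = ∫ ω, ((n - s₀ - b * s₁).choose k : ℝ) * V ω ^ k
            * (1 - V ω) ^ (n - s₀ - b * s₁ - k) ∂ℙ) :
    (fun n : ℕ => (∫ ω, (I n ω : ℝ) ^ 2 * Real.log (I n ω) ∂ℙ)
        - (∫ ω, (V ω) ^ 2 ∂ℙ) * (n : ℝ) ^ 2 * Real.log n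
        - (∫ ω, (V ω) ^ 2 * Real.log (V ω) ∂ℙ) * (n : ℝ) ^ 2)
      =o[atTop] fun n : ℕ => ((n : ℝ)) ^ 2 := by
  have hs₁ : s₁ ≤ s₀ + b * s₁ := le_add_left (Nat.le_mul_of_pos_left s₁ (by omega))
  have hbound : (fun n : ℕ => (n : ℝ) * ((3 + 2 * log n) * (√n + (s₀ + b * s₁ : ℕ))))
      =o[atTop] fun n : ℕ => (n : ℝ) ^ 2 := by
    exact ((isBigO_refl _ _).mul_isLittleO ((isLittleO_log_mul_sqrt_add_atTop 3 2 _).comp_tendsto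
      tendsto_natCast_atTop_atTop)).congr_right fun n => (sq _).symm
  refine (IsBigO.of_norm_eventuallyLE ?_).trans_isLittleO hbound
  filter_upwards [eventually_ge_atTop (s₀ + b * s₁), eventually_gt_atTop 0] with n hn hn0
  refine abs_integral_sq_mul_log_sub_le hVmeas hV01 (hImeas n) (η := n - s₀ - b * s₁)
    (by omega) hn0 hs₁ fun k hk => ?_
  rw [measureReal_def, hIdist n hn k hk]
  simp only [bernsteinPolynomial_eval]

/-- As `n → ∞`,
`E[I_n² · log I_n] = E[V²]·n²·log n + E[V²·log V]·n² + o(n²)` for the subtree size `I n`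
of a random split tree with `n` balls (with `0·log 0 = 0`). -/
theorem stmt14
    (b s₀ s₁ : ℕ) (hb : 2 ≤ b)
    {Ω : Type*} [MeasurableSpace Ω] (ℙ : Measure Ω) [IsProbabilityMeasure ℙ]
    (V : Ω → ℝ) (hVmeas : Measurable V)
    (hV01 : ∀ ω, V ω ∈ Set.Icc (0:ℝ) 1)
    (hVdens : ℙ.map V ≪ (volume : Measure ℝ))
    (hVtail : ∀ x : ℝ, x < 1 → ℙ {ω | V ω ≤ x} < 1)
    (hEV : (∫ ω, V ω ∂ℙ) = 1 / b)
    (I : ℕ → Ω → ℕ) (hImeas : ∀ n, Measurable (I n))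
    (hIdist : ∀ n : ℕ, s₀ + b * s₁ ≤ n → ∀ k : ℕ, k ≤ n - s₀ - b * s₁ →
      (ℙ {ω | I n ω = k + s₁}).toReal
        = ∫ ω, ((n - s₀ - b * s₁).choose k : ℝ) * V ω ^ k
            * (1 - V ω) ^ (n - s₀ - b * s₁ - k) ∂ℙ) :
    (fun n : ℕ => (∫ ω, (I n ω : ℝ) ^ 2 * Real.log (I n ω) ∂ℙ)
        - (∫ ω, (V ω) ^ 2 ∂ℙ) * (n : ℝ) ^ 2 * Real.log n
        - (∫ ω, (V ω) ^ 2 * Real.log (V ω) ∂ℙ) * (n : ℝ) ^ 2)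
      =o[atTop] fun n : ℕ => ((n : ℝ)) ^ 2 :=
  stmt14_general b s₀ s₁ hb ℙ V hVmeas hV01 I hImeas hIdist
end

section
/- For every y ∈ ℝ, b·E[(I_n/n)·1{I_n ≥ e^{−y}·n}] + (s₀/n)·1{n − s₀ ≥ e^{−y}·n} → b·E[V·1{V ≥ e^{−y}}] as n → ∞. (This says that the transition distribution functions F_{−log n} of the associated Markov chain converge pointwise to F(y) = b·E[V·1{−log V ≤ y}].) -/
open MeasureTheory Filter Topology Asymptotics Finset

/-!
Conditionally on `V = x`, `I_n - s₁` is binomial with `n - s₀ - b s₁` trials and success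
probability `x`, so the expectation on the left is `E[G_n(V)]`, where `G_n(x)` averages
`u ↦ u·1{u ≥ e^{-y}}` over the grid points `(k + s₁)/n` against the Bernstein weights.
The variance of the Bernstein weights gives a Chebyshev bound, whence `G_n(x) → x·1{x ≥ e^{-y}}`
at every continuity point `x ≠ e^{-y}`; as `V` has a density this holds almost surely, and
dominated convergence gives the limit. The boundary term `(s₀/n)·1{…}` tends to `0`.
-/

section

open scoped unitInterval

namespace bernstein

theorem sum_range (n : ℕ) (x : I) : ∑ k ∈ range (n + 1), bernstein n k x = 1 := by
  rw [← Fin.sum_univ_eq_sum_range, probability]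

theorem sum_range_sq_sub_mul {n : ℕ} (hn : n ≠ 0) (x : I) :
    ∑ k ∈ range (n + 1), ((x : ℝ) - k / n) ^ 2 * bernstein n k x = x * (1 - x) / n := by
  rw [← Fin.sum_univ_eq_sum_range (fun k => ((x : ℝ) - k / n) ^ 2 * bernstein n k x), ← variance hn]
  rfl

theorem sum_tail_le {n : ℕ} (hn : n ≠ 0) (x : I) {δ : ℝ} (hδ : 0 < δ) :
    ∑ k ∈ range (n + 1) with δ ≤ |(x : ℝ) - (k : ℕ) / n|, bernstein n k x ≤ 1 / δ ^ 2 / n := by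
  calc ∑ k ∈ range (n + 1) with δ ≤ |(x : ℝ) - (k : ℕ) / n|, bernstein n k x
      ≤ ∑ k ∈ range (n + 1) with δ ≤ |(x : ℝ) - (k : ℕ) / n|,
          ((x : ℝ) - k / n) ^ 2 / δ ^ 2 * bernstein n k x := by
        gcongr with k hk
        refine le_mul_of_one_le_left bernstein_nonneg ?_
        rw [one_le_div₀ (by positivity)]
        exact sq_le_sq.mpr (by rw [abs_of_pos hδ]; exact (mem_filter.mp hk).2)
    _ ≤ ∑ k ∈ range (n + 1), ((x : ℝ) - k / n) ^ 2 / δ ^ 2 * bernstein n k x :=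
        sum_le_sum_of_subset_of_nonneg (filter_subset _ _) fun _ _ _ => by positivity
    _ = (x : ℝ) * (1 - x) / δ ^ 2 / n := by
        simp only [div_mul_eq_mul_div, ← sum_div]
        rw [div_right_comm, sum_range_sq_sub_mul hn x]
    _ ≤ 1 / δ ^ 2 / n := by
        gcongr
        nlinarith [x.2.1, x.2.2]

theorem abs_sum_mul_le {n : ℕ} (x : I) {h : ℕ → ℝ} {M : ℝ} (hM : ∀ k ≤ n, |h k| ≤ M) :
    |∑ k ∈ range (n + 1), h k * bernstein n k x| ≤ M := by
  calc |∑ k ∈ range (n + 1), h k * bernstein n k x|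
      ≤ ∑ k ∈ range (n + 1), M * bernstein n k x := by
        refine (abs_sum_le_sum_abs _ _).trans (sum_le_sum fun k hk => ?_)
        rw [abs_mul, abs_of_nonneg bernstein_nonneg]
        gcongr
        exact hM k (Nat.lt_succ_iff.mp (mem_range.mp hk))
    _ = M := by rw [← mul_sum, sum_range, mul_one]

theorem abs_sum_mul_sub_le {n : ℕ} (hn : n ≠ 0) (x : I) (h : ℕ → ℝ) (L : ℝ)
    {ε δ C : ℝ} (hε : 0 ≤ ε) (hδ : 0 < δ)
    (hnear : ∀ k ≤ n, |(x : ℝ) - k / n| < δ → |h k - L| ≤ ε) (hfar : ∀ k ≤ n, |h k - L| ≤ C) :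
    |∑ k ∈ range (n + 1), h k * bernstein n k x - L| ≤ ε + C / δ ^ 2 / n := by
  have hC : 0 ≤ C := (abs_nonneg _).trans (hfar 0 n.zero_le)
  calc |∑ k ∈ range (n + 1), h k * bernstein n k x - L|
        = |∑ k ∈ range (n + 1), (h k - L) * bernstein n k x| := by
        simp only [sub_mul, sum_sub_distrib, ← mul_sum, sum_range, mul_one]
    _ ≤ ∑ k ∈ range (n + 1), |h k - L| * bernstein n k x := by
        refine (abs_sum_le_sum_abs _ _).trans_eq (sum_congr rfl fun k _ => ?_)
        rw [abs_mul, abs_of_nonneg bernstein_nonneg]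
    _ = ∑ k ∈ range (n + 1) with ¬ δ ≤ |(x : ℝ) - (k : ℕ) / n|, |h k - L| * bernstein n k x
          + ∑ k ∈ range (n + 1) with δ ≤ |(x : ℝ) - (k : ℕ) / n|, |h k - L| * bernstein n k x :=
        (sum_filter_not_add_sum_filter _ _ _).symm
    _ ≤ ∑ k ∈ range (n + 1) with ¬ δ ≤ |(x : ℝ) - (k : ℕ) / n|, ε * bernstein n k x
          + ∑ k ∈ range (n + 1) with δ ≤ |(x : ℝ) - (k : ℕ) / n|, C * bernstein n k x := by
        gcongr with k hk k hk <;> have hk' := mem_filter.mp hk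
        · exact hnear k (Nat.lt_succ_iff.mp (mem_range.mp hk'.1)) (not_le.mp hk'.2)
        · exact hfar k (Nat.lt_succ_iff.mp (mem_range.mp hk'.1))
    _ ≤ ∑ k ∈ range (n + 1), ε * bernstein n k x
          + ∑ k ∈ range (n + 1) with δ ≤ |(x : ℝ) - (k : ℕ) / n|, C * bernstein n k x := by
        gcongr
        exact filter_subset _ _
    _ ≤ ε + C * (1 / δ ^ 2 / n) := by
        rw [← mul_sum, ← mul_sum, sum_range, mul_one]
        gcongr
        exact sum_tail_le hn x hδ
    _ = ε + C / δ ^ 2 / n := by ring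

theorem tendsto_sum_comp_mul {φ : ℝ → ℝ} {x : I} (hφ : ContinuousAt φ x) {m : ℕ → ℕ}
    (hm : Tendsto m atTop atTop) {u : ℕ → ℕ → ℝ}
    (hu : ∀ δ > 0, ∀ᶠ n in atTop, ∀ k ≤ m n, |u n k - k / m n| < δ) {M : ℝ}
    (hM : ∀ n, ∀ k ≤ m n, |φ (u n k)| ≤ M) :
    Tendsto (fun n => ∑ k ∈ range (m n + 1), φ (u n k) * bernstein (m n) k x) atTop
      (𝓝 (φ x)) := by
  rw [Metric.tendsto_nhds]
  intro ε hε
  obtain ⟨δ, hδ, hφδ⟩ := Metric.continuousAt_iff.mp hφ (ε / 2) (half_pos hε)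
  have htail : Tendsto (fun n => (M + |φ x|) / (δ / 2) ^ 2 / m n) atTop (𝓝 0) :=
    (tendsto_const_div_atTop_nhds_zero_nat _).comp hm
  filter_upwards [hu (δ / 2) (half_pos hδ), hm.eventually_ne_atTop 0,
    htail.eventually_lt_const (half_pos hε)] with n hun hn htn
  rw [Real.dist_eq]
  refine (abs_sum_mul_sub_le (C := M + |φ x|) hn x _ _ (half_pos hε).le (half_pos hδ)
    (fun k hk hkx => ?_) (fun k hk => ?_)).trans_lt (by linarith)
  · refine (hφδ ?_).le
    rw [Real.dist_eq]
    have := hun k hk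
    rw [abs_sub_lt_iff] at this hkx ⊢
    constructor <;> linarith
  · exact (abs_sub _ _).trans (add_le_add (hM n k hk) le_rfl)

end bernstein

end

section

variable {Ω : Type*} [MeasurableSpace Ω] {ℙ : Measure Ω}

theorem integral_comp_eq_sum_of_sum_measureReal_eq_one [IsProbabilityMeasure ℙ] {α : Type*}
    [MeasurableSpace α] [DiscreteMeasurableSpace α] {X : Ω → α} (hX : Measurable X) {S : Finset α}
    (hS : ∑ v ∈ S, ℙ.real (X ⁻¹' {v}) = 1) (f : α → ℝ) :
    ∫ ω, f (X ω) ∂ℙ = ∑ v ∈ S, ℙ.real (X ⁻¹' {v}) * f v := by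
  have hμ : ∀ v, (ℙ.map X).real {v} = ℙ.real (X ⁻¹' {v}) := fun v =>
    map_measureReal_apply hX (measurableSet_singleton v)
  have : IsProbabilityMeasure (ℙ.map X) := Measure.isProbabilityMeasure_map hX.aemeasurable
  have hSfull : ∀ᵐ v ∂ℙ.map X, v ∈ (S : Set α) := by
    rw [ae_iff, ← Set.compl_def, prob_compl_eq_zero_iff S.measurableSet,
      ← ENNReal.toReal_eq_one_iff, ← measureReal_def, ← sum_measureReal_singleton]
    simpa only [hμ] using hS
  rw [← integral_map hX.aemeasurable Measurable.of_discrete.aestronglyMeasurable,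
    ← Measure.restrict_eq_self_of_ae_mem hSfull, setIntegral_finset S IntegrableOn.finset]
  simp only [hμ, smul_eq_mul]

theorem integral_comp_eq_integral_sum_of_law_eq [IsProbabilityMeasure ℙ] {α : Type*}
    [MeasurableSpace α] [DiscreteMeasurableSpace α] {X : Ω → α} (hX : Measurable X) {ι : Type*}
    (s : Finset ι) {j : ι → α} (hj : Set.InjOn j s) {w : ι → Ω → ℝ}
    (hw : ∀ i ∈ s, Integrable (w i) ℙ) (hsum : ∀ ω, ∑ i ∈ s, w i ω = 1)
    (hlaw : ∀ i ∈ s, ℙ.real (X ⁻¹' {j i}) = ∫ ω, w i ω ∂ℙ) (f : α → ℝ) :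
    ∫ ω, f (X ω) ∂ℙ = ∫ ω, ∑ i ∈ s, f (j i) * w i ω ∂ℙ := by
  classical
  have hS : ∑ v ∈ s.image j, ℙ.real (X ⁻¹' {v}) = 1 := by
    rw [sum_image hj, sum_congr rfl hlaw, ← integral_finsetSum _ hw]
    simp [hsum]
  rw [integral_comp_eq_sum_of_sum_measureReal_eq_one hX hS, sum_image hj,
    integral_finsetSum _ fun i hi => (hw i hi).const_mul _]
  refine sum_congr rfl fun i hi => ?_
  rw [hlaw i hi, integral_const_mul, mul_comm]

theorem bernstein.integrable_comp [IsFiniteMeasure ℙ] {X : Ω → unitInterval} (hX : Measurable X)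
    (n k : ℕ) : Integrable (fun ω => bernstein n k (X ω)) ℙ :=
  Integrable.of_bound ((bernstein n k).continuous.measurable.comp hX).aestronglyMeasurable _
    (ae_of_all _ fun _ => (bernstein n k).norm_coe_le_norm _)

theorem integral_comp_eq_integral_sum_bernstein [IsProbabilityMeasure ℙ] {X : Ω → ℕ}
    (hX : Measurable X) {U : Ω → unitInterval} (hU : Measurable U) (m s : ℕ)
    (hlaw : ∀ k ≤ m, ℙ.real (X ⁻¹' {k + s}) = ∫ ω, bernstein m k (U ω) ∂ℙ) (f : ℕ → ℝ) :
    ∫ ω, f (X ω) ∂ℙ = ∫ ω, ∑ k ∈ range (m + 1), f (k + s) * bernstein m k (U ω) ∂ℙ :=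
  integral_comp_eq_integral_sum_of_law_eq hX (range (m + 1))
    (fun _ _ _ _ h => Nat.add_right_cancel h) (fun k _ => bernstein.integrable_comp hU m k)
    (fun ω => bernstein.sum_range m (U ω))
    (fun k hk => hlaw k (Nat.lt_succ_iff.mp (mem_range.mp hk))) f

theorem bernstein.tendsto_integral_sum_comp_mul [IsFiniteMeasure ℙ] {U : Ω → unitInterval}
    (hU : Measurable U) {φ : ℝ → ℝ} (hφ : ∀ᵐ ω ∂ℙ, ContinuousAt φ (U ω)) {m : ℕ → ℕ}
    (hm : Tendsto m atTop atTop) {u : ℕ → ℕ → ℝ}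
    (hu : ∀ δ > 0, ∀ᶠ n in atTop, ∀ k ≤ m n, |u n k - k / m n| < δ) {M : ℝ}
    (hM : ∀ n, ∀ k ≤ m n, |φ (u n k)| ≤ M) :
    Tendsto (fun n => ∫ ω, ∑ k ∈ range (m n + 1), φ (u n k) * bernstein (m n) k (U ω) ∂ℙ) atTop
      (𝓝 (∫ ω, φ (U ω) ∂ℙ)) :=
  tendsto_integral_of_dominated_convergence (fun _ => M)
    (fun _ => (Finset.measurable_sum _ fun k _ =>
      ((bernstein _ k).continuous.measurable.comp hU).const_mul _).aestronglyMeasurable)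
    (integrable_const M) (fun n => ae_of_all _ fun _ => bernstein.abs_sum_mul_le _ (hM n))
    (hφ.mono fun _ hω => bernstein.tendsto_sum_comp_mul hω hm hu hM)

theorem ae_ne_of_map_absolutelyContinuous {X : Ω → ℝ} (hX : AEMeasurable X ℙ)
    (h : ℙ.map X ≪ volume) (c : ℝ) : ∀ᵐ ω ∂ℙ, X ω ≠ c :=
  ae_of_ae_map hX (h.ae_le (Measure.ae_ne volume c))

end

theorem continuousAt_ite_le_self {c x : ℝ} (hx : x ≠ c) :
    ContinuousAt (fun u : ℝ => if c ≤ u then u else 0) x := by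
  rcases hx.lt_or_gt with hlt | hgt
  · refine (continuousAt_const (y := (0 : ℝ))).congr
      (eventuallyEq_of_mem (Iio_mem_nhds hlt) fun u hu => ?_)
    simp [not_le.mpr (Set.mem_Iio.mp hu)]
  · refine continuousAt_id.congr (eventuallyEq_of_mem (Ioi_mem_nhds hgt) fun u hu => ?_)
    simp [(Set.mem_Ioi.mp hu).le]

theorem abs_ite_le_abs (c u : ℝ) : |if c ≤ u then u else 0| ≤ |u| := by
  split_ifs <;> simp

theorem natCast_add_div_le {k n : ℕ} (s : ℕ) (hk : k ≤ n) : ((k + s : ℕ) : ℝ) / n ≤ 1 + s := by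
  rcases n.eq_zero_or_pos with rfl | hn
  · simp only [CharP.cast_eq_zero, div_zero]
    positivity
  · push_cast
    rw [add_div]
    exact add_le_add (div_le_one_of_le₀ (by exact_mod_cast hk) n.cast_nonneg)
      (div_le_self s.cast_nonneg (by exact_mod_cast hn))

theorem eventually_abs_natCast_add_div_sub_div_lt (a s : ℕ) {δ : ℝ} (hδ : 0 < δ) :
    ∀ᶠ n : ℕ in atTop, ∀ k ≤ n - a, |((k + s : ℕ) : ℝ) / n - k / (n - a : ℕ)| < δ := by
  filter_upwards [(tendsto_const_div_atTop_nhds_zero_nat ((s + a : ℕ) : ℝ)).eventually_lt_const hδ,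
    eventually_gt_atTop a] with n hn han k hk
  refine lt_of_le_of_lt ?_ hn
  have hn0 : (0 : ℝ) < n := by exact_mod_cast (Nat.zero_le a).trans_lt han
  have hm0 : (0 : ℝ) < (n - a : ℕ) := by exact_mod_cast Nat.sub_pos_of_lt han
  have hnm : (n : ℝ) = (n - a : ℕ) + a := by rw [Nat.cast_sub han.le]; ring
  have hkm : (k : ℝ) ≤ (n - a : ℕ) := by exact_mod_cast hk
  rw [div_sub_div _ _ hn0.ne' hm0.ne', abs_div, abs_of_pos (mul_pos hn0 hm0),
    div_le_div_iff₀ (mul_pos hn0 hm0) hn0]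
  have : |((k + s : ℕ) : ℝ) * (n - a : ℕ) - n * k| ≤ (s + a : ℕ) * (n - a : ℕ) := by
    rw [abs_le, hnm]
    push_cast
    constructor <;> nlinarith [(k.cast_nonneg : (0 : ℝ) ≤ k)]
  nlinarith

theorem stmt15_general
    (b s₀ s₁ : ℕ)
    {Ω : Type*} [MeasurableSpace Ω] (ℙ : Measure Ω) [IsProbabilityMeasure ℙ]
    (V : Ω → ℝ) (hVmeas : Measurable V)
    (hV01 : ∀ ω, V ω ∈ Set.Icc (0:ℝ) 1)
    (hVdens : ℙ.map V ≪ (volume : Measure ℝ))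
    (I : ℕ → Ω → ℕ) (hImeas : ∀ n, Measurable (I n))
    (hIdist : ∀ n : ℕ, s₀ + b * s₁ ≤ n → ∀ k : ℕ, k ≤ n - s₀ - b * s₁ →
      (ℙ {ω | I n ω = k + s₁}).toReal
        = ∫ ω, ((n - s₀ - b * s₁).choose k : ℝ) * V ω ^ k
            * (1 - V ω) ^ (n - s₀ - b * s₁ - k) ∂ℙ) :
    ∀ y : ℝ,
      Tendsto (fun n : ℕ =>
          (b : ℝ) * (∫ ω, (if Real.exp (-y) * n ≤ (I n ω : ℝ) then (I n ω : ℝ) / n else 0) ∂ℙ)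
            + ((s₀ : ℝ) / n) * (if Real.exp (-y) * n ≤ (n : ℝ) - s₀ then 1 else 0))
        atTop
        (𝓝 ((b : ℝ) * ∫ ω, (if Real.exp (-y) ≤ V ω then V ω else 0) ∂ℙ)) := by
  intro y
  set c := Real.exp (-y)
  set a := s₀ + b * s₁
  set φ : ℝ → ℝ := fun u => if c ≤ u then u else 0
  let Vᵢ : Ω → unitInterval := fun ω => ⟨V ω, hV01 ω⟩
  have hVᵢ : Measurable Vᵢ := hVmeas.subtype_mk
  have hφ_le : ∀ n, ∀ k ≤ n - a, |φ (((k + s₁ : ℕ) : ℝ) / n)| ≤ 1 + s₁ := fun n k hk =>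
    (abs_ite_le_abs _ _).trans <| (abs_of_nonneg (by positivity)).trans_le <|
      natCast_add_div_le s₁ (hk.trans (Nat.sub_le n a))
  have hG := bernstein.tendsto_integral_sum_comp_mul hVᵢ
    ((ae_ne_of_map_absolutelyContinuous hVmeas.aemeasurable hVdens c).mono
      fun _ => continuousAt_ite_le_self)
    (tendsto_sub_atTop_nat a) (fun _ => eventually_abs_natCast_add_div_sub_div_lt a s₁) hφ_le
  have hlaw : ∀ᶠ n in atTop,
      ∫ ω, ∑ k ∈ range (n - a + 1), φ (((k + s₁ : ℕ) : ℝ) / n) * bernstein (n - a) k (Vᵢ ω) ∂ℙ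
        = ∫ ω, (if c * n ≤ (I n ω : ℝ) then (I n ω : ℝ) / n else 0) ∂ℙ := by
    filter_upwards [eventually_ge_atTop a, eventually_gt_atTop 0] with n han hn
    have hφ : ∀ j : ℕ, (if c * n ≤ (j : ℝ) then (j : ℝ) / n else 0) = φ (j / n) := fun j => by
      simp only [φ, le_div_iff₀ ((Nat.cast_pos (α := ℝ)).mpr hn)]
    simp only [hφ]
    refine (integral_comp_eq_integral_sum_bernstein (hImeas n) hVᵢ (n - a) s₁ (fun k hk => ?_)
      (fun j => φ (j / n))).symm
    have h := hIdist n han k (by rwa [Nat.sub_sub])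
    rw [Nat.sub_sub] at h
    simp only [measureReal_def, bernstein_apply]
    exact h
  have hs₀ : Tendsto (fun n : ℕ => ((s₀ : ℝ) / n) * (if c * n ≤ (n : ℝ) - s₀ then 1 else 0))
      atTop (𝓝 0) :=
    squeeze_zero (fun n => by positivity)
      (fun n => mul_le_of_le_one_right (by positivity) (by split_ifs <;> norm_num))
      (tendsto_const_div_atTop_nhds_zero_nat _)
  simpa using ((hG.congr' hlaw).const_mul (b : ℝ)).add hs₀

/-- For every `y ∈ ℝ`,
`b·E[(I_n/n)·1{I_n ≥ e^{-y}·n}] + (s₀/n)·1{n-s₀ ≥ e^{-y}·n} → b·E[V·1{V ≥ e^{-y}}]`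
as `n → ∞`: the transition distribution functions of the associated Markov chain converge
pointwise to `F(y) = b·E[V·1{-log V ≤ y}]`. -/
theorem stmt15
    (b s₀ s₁ : ℕ) (hb : 2 ≤ b)
    {Ω : Type*} [MeasurableSpace Ω] (ℙ : Measure Ω) [IsProbabilityMeasure ℙ]
    (V : Ω → ℝ) (hVmeas : Measurable V)
    (hV01 : ∀ ω, V ω ∈ Set.Icc (0:ℝ) 1)
    (hVdens : ℙ.map V ≪ (volume : Measure ℝ))
    (hVtail : ∀ x : ℝ, x < 1 → ℙ {ω | V ω ≤ x} < 1)
    (hEV : (∫ ω, V ω ∂ℙ) = 1 / b)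
    (I : ℕ → Ω → ℕ) (hImeas : ∀ n, Measurable (I n))
    (hIdist : ∀ n : ℕ, s₀ + b * s₁ ≤ n → ∀ k : ℕ, k ≤ n - s₀ - b * s₁ →
      (ℙ {ω | I n ω = k + s₁}).toReal
        = ∫ ω, ((n - s₀ - b * s₁).choose k : ℝ) * V ω ^ k
            * (1 - V ω) ^ (n - s₀ - b * s₁ - k) ∂ℙ) :
    ∀ y : ℝ,
      Tendsto (fun n : ℕ =>
          (b : ℝ) * (∫ ω, (if Real.exp (-y) * n ≤ (I n ω : ℝ) then (I n ω : ℝ) / n else 0) ∂ℙ)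
            + ((s₀ : ℝ) / n) * (if Real.exp (-y) * n ≤ (n : ℝ) - s₀ then 1 else 0))
        atTop
        (𝓝 ((b : ℝ) * ∫ ω, (if Real.exp (-y) ≤ V ω then V ω else 0) ∂ℙ)) :=
  stmt15_general b s₀ s₁ ℙ V hVmeas hV01 hVdens I hImeas hIdist
end
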